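/- arXiv:gr-qc/0204042 — 2 statements merged into one kernel-verified Lean document; each statement's English description precedes it below -/
import Mathlib

section
/- Every smooth solution u of Hess u = u g on the unit hyperboloid Hⁿ = {Y ∈ ℝⁿ⁺¹ : -Y₀² + Y₁² + ⋯ + Yₙ² = -1, Y₀ ≥ 1} (n > 1, with the induced Riemannian metric) is of the form u(Y) = P·Y for a constant vector P ∈ ℝⁿ⁺¹ (with the Minkowski inner product P·Y = -P⁰Y⁰ + ΣPⁱYⁱ), and then |∇u|² - u² = P·P. -/
/-- Minkowski inner product on `ℝⁿ⁺¹`: `x·y = -x⁰y⁰ + Σᵢ xⁱyⁱ`. -/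
def mink {n : ℕ} (x y : Fin (n + 1) → ℝ) : ℝ :=
  -(x 0 * y 0) + ∑ i : Fin n, x i.succ * y i.succ

/-- Ambient Minkowski gradient of `u : ℝⁿ'¹ → ℝ` (index raised with `η`). -/
noncomputable def minkGrad {n : ℕ} (u : (Fin (n + 1) → ℝ) → ℝ)
    (Y : Fin (n + 1) → ℝ) : Fin (n + 1) → ℝ :=
  fun i => (if i = 0 then (-1 : ℝ) else 1) * fderiv ℝ u Y (Pi.single i 1)

/-- Riemannian gradient of (the restriction of) `u` on the unit hyperboloid:
Minkowski-orthogonal projection of the ambient Minkowski gradient to the tangent space. -/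
noncomputable def hypGrad {n : ℕ} (u : (Fin (n + 1) → ℝ) → ℝ)
    (Y : Fin (n + 1) → ℝ) : Fin (n + 1) → ℝ :=
  fun i => minkGrad u Y i + mink (minkGrad u Y) Y * Y i

/-- Riemannian Hessian of (the restriction of) `u` on the unit hyperboloid,
computed extrinsically: `Hess u (X,X') = D²u(X,X') + η(X,X')·(∂_Y u)`. -/
noncomputable def hypHess {n : ℕ} (u : (Fin (n + 1) → ℝ) → ℝ)
    (Y X X' : Fin (n + 1) → ℝ) : ℝ :=
  fderiv ℝ (fun p => fderiv ℝ u p X') Y X + mink X X' * fderiv ℝ u Y Y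

namespace Aux
variable {n : ℕ}

noncomputable def eta (i : Fin (n + 1)) : ℝ := if i = 0 then -1 else 1

lemma eta_sq (i : Fin (n + 1)) : eta i * eta i = 1 := by
  unfold eta; split <;> norm_num

lemma mink_eq (x y : Fin (n + 1) → ℝ) :
    mink x y = ∑ i : Fin (n + 1), eta i * (x i * y i) := by
  rw [Fin.sum_univ_succ]
  simp [mink, eta, Fin.succ_ne_zero]

lemma mink_comm (x y : Fin (n + 1) → ℝ) : mink x y = mink y x := by
  simp only [mink_eq]; congr 1; funext i; ring

lemma mink_add_left (x₁ x₂ y : Fin (n + 1) → ℝ) :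
    mink (fun j => x₁ j + x₂ j) y = mink x₁ y + mink x₂ y := by
  simp only [mink_eq, ← Finset.sum_add_distrib]
  exact Finset.sum_congr rfl fun i _ => by ring

lemma mink_sub_left (x₁ x₂ y : Fin (n + 1) → ℝ) :
    mink (fun j => x₁ j - x₂ j) y = mink x₁ y - mink x₂ y := by
  simp only [mink_eq, ← Finset.sum_sub_distrib]
  exact Finset.sum_congr rfl fun i _ => by ring

lemma mink_smul_left (a : ℝ) (x y : Fin (n + 1) → ℝ) :
    mink (fun j => a * x j) y = a * mink x y := by
  simp only [mink_eq, Finset.mul_sum]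
  exact Finset.sum_congr rfl fun i _ => by ring

lemma mink_single_left (i : Fin (n + 1)) (y : Fin (n + 1) → ℝ) :
    mink (Pi.single i 1) y = eta i * y i := by
  rw [mink_eq, Fintype.sum_eq_single i (fun j hj => by
    rw [Pi.single_apply, if_neg hj]; ring)]
  simp

lemma clm_apply_eq_sum (L : (Fin (n + 1) → ℝ) →L[ℝ] ℝ) (X : Fin (n + 1) → ℝ) :
    L X = ∑ i : Fin (n + 1), X i * L (Pi.single i 1) := by
  conv_lhs => rw [← Finset.univ_sum_single X]
  rw [map_sum]
  refine Finset.sum_congr rfl fun i _ => ?_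
  have : Pi.single i (X i) = X i • (Pi.single i (1:ℝ) : Fin (n+1) → ℝ) := by
    rw [← Pi.single_smul, smul_eq_mul, mul_one]
  rw [this, map_smul, smul_eq_mul]

end Aux

namespace Aux
variable {n : ℕ} {u : (Fin (n + 1) → ℝ) → ℝ}

lemma hdu (hu : ContDiff ℝ (⊤ : ℕ∞) u) : Differentiable ℝ (fderiv ℝ u) :=
  (hu.fderiv_right (m := ((⊤ : ℕ∞) : WithTop ℕ∞)) (by exact_mod_cast (le_top : (⊤:ℕ∞) + 1 ≤ ⊤))).differentiable (by simp)

lemma hud (hu : ContDiff ℝ (⊤ : ℕ∞) u) : Differentiable ℝ u := hu.differentiable (by simp)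

lemma diff_du_apply (hu : ContDiff ℝ (⊤ : ℕ∞) u) (w : Fin (n + 1) → ℝ) :
    Differentiable ℝ (fun p => fderiv ℝ u p w) :=
  (ContinuousLinearMap.apply ℝ ℝ w).differentiable.comp (hdu hu)

lemma diff_du_self (hu : ContDiff ℝ (⊤ : ℕ∞) u) : Differentiable ℝ (fun p => fderiv ℝ u p p) :=
  fun p => ((hdu hu) p).clm_apply differentiableAt_fun_id

/-- second derivative applied, as application of `fderiv (fderiv u)` -/
lemma d2_eq (hu : ContDiff ℝ (⊤ : ℕ∞) u) (Y X w : Fin (n + 1) → ℝ) :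
    fderiv ℝ (fun p => fderiv ℝ u p w) Y X = (fderiv ℝ (fderiv ℝ u) Y X) w := by
  have h := fderiv_clm_apply (c := fderiv ℝ u) (u := fun _ => w)
    ((hdu hu) Y) (differentiableAt_const w)
  rw [h]
  simp

lemma fderiv_du_self (hu : ContDiff ℝ (⊤ : ℕ∞) u) (Y X : Fin (n + 1) → ℝ) :
    fderiv ℝ (fun p => fderiv ℝ u p p) Y X
      = fderiv ℝ u Y X + (fderiv ℝ (fderiv ℝ u) Y X) Y := by
  have h := fderiv_clm_apply (c := fderiv ℝ u) (u := fun p => p)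
    ((hdu hu) Y) differentiableAt_fun_id
  rw [h]
  simp

end Aux

namespace Aux
variable {n : ℕ} {u : (Fin (n + 1) → ℝ) → ℝ}

lemma mink_minkGrad (Y X : Fin (n + 1) → ℝ) :
    mink (fun i => eta i * fderiv ℝ u Y (Pi.single i 1)) X = fderiv ℝ u Y X := by
  rw [mink_eq, clm_apply_eq_sum (fderiv ℝ u Y) X]
  refine Finset.sum_congr rfl fun i _ => ?_
  linear_combination (fderiv ℝ u Y (Pi.single i 1) * X i) * eta_sq i

/-- The candidate constant vector field, componentwise. -/
noncomputable def Fv (u : (Fin (n + 1) → ℝ) → ℝ) (i : Fin (n + 1)) (p : Fin (n + 1) → ℝ) : ℝ :=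
  eta i * fderiv ℝ u p (Pi.single i 1) + fderiv ℝ u p p * p i - u p * p i

lemma diff_Fv (hu : ContDiff ℝ (⊤ : ℕ∞) u) (i : Fin (n + 1)) : Differentiable ℝ (Fv u i) := by
  refine ((((diff_du_apply hu (Pi.single i 1)).const_mul _).add
    ((diff_du_self hu).mul ?_)).sub ((hud hu).mul ?_)) <;>
  exact (ContinuousLinearMap.proj i : ((Fin (n+1) → ℝ)) →L[ℝ] ℝ).differentiable

lemma fderiv_proj (i : Fin (n + 1)) (Y X : Fin (n + 1) → ℝ) :
    fderiv ℝ (fun p : Fin (n+1) → ℝ => p i) Y X = X i := by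
  have : fderiv ℝ (fun p : Fin (n+1) → ℝ => p i) Y
      = (ContinuousLinearMap.proj i : ((Fin (n+1) → ℝ)) →L[ℝ] ℝ) :=
    (ContinuousLinearMap.proj i :
      ((Fin (n+1) → ℝ)) →L[ℝ] ℝ).hasFDerivAt.fderiv
  rw [this]; rfl

lemma fderiv_Fv (hu : ContDiff ℝ (⊤ : ℕ∞) u) (i : Fin (n + 1)) (Y X : Fin (n + 1) → ℝ) :
    fderiv ℝ (Fv u i) Y X
      = eta i * ((fderiv ℝ (fderiv ℝ u) Y X) (Pi.single i 1))
        + (fderiv ℝ u Y X + (fderiv ℝ (fderiv ℝ u) Y X) Y) * Y i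
        + fderiv ℝ u Y Y * X i
        - (fderiv ℝ u Y X * Y i + u Y * X i) := by
  have hproj : DifferentiableAt ℝ (fun p : Fin (n+1) → ℝ => p i) Y :=
    (ContinuousLinearMap.proj i : ((Fin (n+1) → ℝ)) →L[ℝ] ℝ).differentiableAt
  have h1 : DifferentiableAt ℝ (fun p => eta i * fderiv ℝ u p (Pi.single i 1)) Y :=
    ((diff_du_apply hu (Pi.single i 1)) Y).const_mul _
  have h2 : DifferentiableAt ℝ (fun p => fderiv ℝ u p p * p i) Y :=
    ((diff_du_self hu) Y).mul hproj
  have h3 : DifferentiableAt ℝ (fun p => u p * p i) Y := ((hud hu) Y).mul hproj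
  unfold Fv
  rw [fderiv_fun_sub (h1.fun_add h2) h3, fderiv_fun_add h1 h2]
  rw [fderiv_const_mul ((diff_du_apply hu (Pi.single i 1)) Y) (eta i)]
  rw [fderiv_fun_mul ((diff_du_self hu) Y) hproj, fderiv_fun_mul ((hud hu) Y) hproj]
  simp only [ContinuousLinearMap.add_apply, ContinuousLinearMap.sub_apply,
    ContinuousLinearMap.smul_apply, smul_eq_mul]
  rw [d2_eq hu, fderiv_du_self hu, fderiv_proj]
  ring

end Aux

namespace Aux
variable {n : ℕ} {u : (Fin (n + 1) → ℝ) → ℝ}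

lemma Fv_vanish (hu : ContDiff ℝ (⊤ : ℕ∞) u)
    (heq : ∀ Y X X' : Fin (n + 1) → ℝ,
      mink Y Y = -1 → 1 ≤ Y 0 → mink X Y = 0 → mink X' Y = 0 →
      fderiv ℝ (fun p => fderiv ℝ u p X') Y X + mink X X' * fderiv ℝ u Y Y
        = u Y * mink X X')
    (Y X : Fin (n + 1) → ℝ) (hY : mink Y Y = -1) (hY0 : 1 ≤ Y 0)
    (hX : mink X Y = 0) (i : Fin (n + 1)) :
    fderiv ℝ (Fv u i) Y X = 0 := by
  set T : Fin (n + 1) → ℝ := fun j => (Pi.single i 1 : Fin (n+1) → ℝ) j + (eta i * Y i) * Y j with hTdef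
  have hT : mink T Y = 0 := by
    rw [hTdef, mink_add_left, mink_smul_left, mink_single_left, hY]; ring
  have hXT : mink X T = eta i * X i := by
    rw [mink_comm, hTdef, mink_add_left, mink_smul_left, mink_single_left,
      mink_comm Y X, hX]; ring
  have hTv : T = Pi.single i 1 + (eta i * Y i) • Y := by
    funext j; simp [hTdef]
  have hh := heq Y X T hY hY0 hX hT
  rw [hXT, hTv] at hh
  rw [d2_eq hu, map_add, map_smul, smul_eq_mul] at hh
  rw [fderiv_Fv hu]
  set a := (fderiv ℝ (fderiv ℝ u) Y X) (Pi.single i 1)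
  set b := (fderiv ℝ (fderiv ℝ u) Y X) Y
  set v := fderiv ℝ u Y X
  set d := fderiv ℝ u Y Y
  linear_combination eta i * hh - (b * Y i + d * X i - u Y * X i) * eta_sq i

noncomputable def ch {n : ℕ} (x : Fin n → ℝ) : Fin (n + 1) → ℝ :=
  Fin.cons (Real.sqrt (1 + ∑ k, x k ^ 2)) x

lemma ch_zero (x : Fin n → ℝ) : ch x 0 = Real.sqrt (1 + ∑ k, x k ^ 2) := rfl

lemma ch_succ (x : Fin n → ℝ) (k : Fin n) : ch x k.succ = x k := rfl

lemma q_pos (x : Fin n → ℝ) : 0 < 1 + ∑ k, x k ^ 2 := by positivity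

lemma ch_hyp (x : Fin n → ℝ) : mink (ch x) (ch x) = -1 := by
  have h := Real.mul_self_sqrt (le_of_lt (q_pos x))
  simp only [mink, ch_zero, ch_succ, h]
  have : ∀ k : Fin n, x k * x k = x k ^ 2 := fun k => (sq (x k)).symm
  simp only [this]
  ring

lemma ch_ge (x : Fin n → ℝ) : 1 ≤ ch x 0 := by
  rw [ch_zero]
  have h0 : (0:ℝ) ≤ ∑ k, x k ^ 2 := by positivity
  calc (1:ℝ) = Real.sqrt 1 := Real.sqrt_one.symm
    _ ≤ _ := Real.sqrt_le_sqrt (by linarith)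

lemma ch_eq_of_hyp (Y : Fin (n + 1) → ℝ) (hY : mink Y Y = -1) (hY0 : 1 ≤ Y 0) :
    ch (fun k => Y k.succ) = Y := by
  funext j
  refine Fin.cases ?_ (fun k => rfl) j
  rw [ch_zero]
  have h1 : 1 + ∑ k : Fin n, Y k.succ ^ 2 = Y 0 ^ 2 := by
    have := hY
    simp only [mink] at this
    have h2 : ∀ k : Fin n, Y k.succ * Y k.succ = Y k.succ ^ 2 := fun k => (sq _).symm
    simp only [h2] at this
    nlinarith [this]
  rw [h1]
  exact Real.sqrt_sq (by linarith)

/-- the curve `t ↦ ch (x + t v)` and its derivative -/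
noncomputable def gam (x v : Fin n → ℝ) (t : ℝ) : Fin (n + 1) → ℝ := ch (x + t • v)

noncomputable def gamd (x v : Fin n → ℝ) (t : ℝ) : Fin (n + 1) → ℝ :=
  Fin.cons ((∑ k, 2 * (x k + t * v k) * v k)
    / (2 * Real.sqrt (1 + ∑ k, (x k + t * v k) ^ 2))) v

lemma gam_apply (x v : Fin n → ℝ) (t : ℝ) : gam x v t = ch (fun k => x k + t * v k) := by
  unfold gam; congr 1

lemma hasDerivAt_gam (x v : Fin n → ℝ) (t : ℝ) :
    HasDerivAt (gam x v) (gamd x v t) t := by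
  rw [hasDerivAt_pi]
  intro j
  have hcomp : ∀ s : ℝ, gam x v s = ch (fun k => x k + s * v k) := fun s => gam_apply x v s
  refine Fin.cases ?_ ?_ j
  · -- zero component
    have hq : ∀ s : ℝ, gam x v s 0 = Real.sqrt (1 + ∑ k, (x k + s * v k) ^ 2) := by
      intro s; rw [hcomp s, ch_zero]
    simp only [hq]
    have hin : HasDerivAt (fun s : ℝ => 1 + ∑ k, (x k + s * v k) ^ 2)
        (∑ k, 2 * (x k + t * v k) * v k) t := by
      have : HasDerivAt (fun s : ℝ => ∑ k, (x k + s * v k) ^ 2)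
          (∑ k, 2 * (x k + t * v k) * v k) t := by
        refine HasDerivAt.fun_sum fun k _ => ?_
        have h1 : HasDerivAt (fun s : ℝ => x k + s * v k) (v k) t := by
          simpa using ((hasDerivAt_id t).mul_const (v k)).const_add (x k)
        have := h1.fun_pow 2
        refine this.congr_deriv ?_
        ring
      simpa using this.const_add 1
    have hne : 1 + ∑ k, (x k + t * v k) ^ 2 ≠ 0 := by positivity
    exact hin.sqrt hne
  · -- succ components
    intro k
    have hk : ∀ s : ℝ, gam x v s k.succ = x k + s * v k := by
      intro s; rw [hcomp s, ch_succ]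
    have h1 : HasDerivAt (fun s : ℝ => x k + s * v k) (v k) t := by
      simpa using ((hasDerivAt_id t).mul_const (v k)).const_add (x k)
    simp only [hk]
    exact h1

lemma gam_tangent (x v : Fin n → ℝ) (t : ℝ) :
    mink (gamd x v t) (gam x v t) = 0 := by
  rw [gam_apply]
  set y : Fin n → ℝ := fun k => x k + t * v k with hy
  have hs : Real.sqrt (1 + ∑ k, y k ^ 2) ≠ 0 := by
    have := q_pos y
    positivity
  have h0 : gamd x v t 0 = (∑ k, 2 * y k * v k) / (2 * Real.sqrt (1 + ∑ k, y k ^ 2)) := rfl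
  have hsk : ∀ k : Fin n, gamd x v t k.succ = v k := fun k => rfl
  simp only [mink, h0, hsk, ch_zero, ch_succ]
  have hS : ∑ k, 2 * y k * v k = 2 * ∑ k, v k * y k := by
    rw [Finset.mul_sum]; exact Finset.sum_congr rfl fun k _ => by ring
  rw [hS]
  field_simp
  ring

variable {u : (Fin (n + 1) → ℝ) → ℝ}

lemma mink_expand (a b : Fin (n + 1) → ℝ) (c : ℝ) :
    mink (fun j => a j - c * b j) (fun j => a j - c * b j)
      = mink a a - 2 * c * mink a b + c ^ 2 * mink b b := by
  have h : ∀ j, eta j * ((a j - c * b j) * (a j - c * b j))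
      = eta j * (a j * a j) - 2 * c * (eta j * (a j * b j))
        + c ^ 2 * (eta j * (b j * b j)) := fun j => by ring
  simp only [mink_eq, h, Finset.sum_add_distrib, Finset.sum_sub_distrib, ← Finset.mul_sum]

lemma mink_hypGrad_self (Y : Fin (n + 1) → ℝ) (hY : mink Y Y = -1) :
    mink (hypGrad u Y) Y = 0 := by
  have h : hypGrad u Y = fun i => minkGrad u Y i + mink (minkGrad u Y) Y * Y i := rfl
  rw [h, mink_add_left, mink_smul_left, hY]
  ring

lemma Fv_eq (Y : Fin (n + 1) → ℝ) (i : Fin (n + 1)) :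
    Fv u i Y = hypGrad u Y i - u Y * Y i := by
  have hmg : minkGrad u Y = fun i => eta i * fderiv ℝ u Y (Pi.single i 1) := rfl
  have h2 : mink (minkGrad u Y) Y = fderiv ℝ u Y Y := by rw [hmg]; exact mink_minkGrad Y Y
  show eta i * fderiv ℝ u Y (Pi.single i 1) + fderiv ℝ u Y Y * Y i - u Y * Y i = _
  rw [hypGrad, h2, hmg]

lemma Fv_const (hu : ContDiff ℝ (⊤ : ℕ∞) u)
    (heq : ∀ Y X X' : Fin (n + 1) → ℝ,
      mink Y Y = -1 → 1 ≤ Y 0 → mink X Y = 0 → mink X' Y = 0 →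
      fderiv ℝ (fun p => fderiv ℝ u p X') Y X + mink X X' * fderiv ℝ u Y Y
        = u Y * mink X X')
    (i : Fin (n + 1)) (x : Fin n → ℝ) : Fv u i (ch x) = Fv u i (ch 0) := by
  have hd : ∀ t : ℝ, HasDerivAt (fun t => Fv u i (gam 0 x t)) 0 t := by
    intro t
    have h := ((diff_Fv hu i (gam 0 x t)).hasFDerivAt).comp_hasDerivAt t
      (hasDerivAt_gam 0 x t)
    have hhyp : mink (gam 0 x t) (gam 0 x t) = -1 := by rw [gam_apply]; exact ch_hyp _
    have hge : 1 ≤ gam 0 x t 0 := by rw [gam_apply]; exact ch_ge _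
    have hz : fderiv ℝ (Fv u i) (gam 0 x t) (gamd 0 x t) = 0 :=
      Fv_vanish hu heq _ _ hhyp hge (gam_tangent 0 x t) i
    rw [hz] at h
    exact h
  have hconst := is_const_of_deriv_eq_zero
    (fun t => (hd t).differentiableAt) (fun t => (hd t).deriv) 1 0
  have h1 : gam 0 x 1 = ch x := by unfold gam; simp
  have h0 : gam 0 x 0 = ch 0 := by unfold gam; simp
  simpa [h1, h0] using hconst

end Aux

/-- Every smooth solution of `Hess u = u g` on the unit hyperboloid
`Hⁿ = {Y : Y·Y = -1, Y⁰ ≥ 1}` (`n > 1`) is `u(Y) = P·Y` for a constant vector `P`,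
and then `|∇u|² - u² = P·P` (all products Minkowskian). -/
theorem stmt_11 (n : ℕ) (hn : 1 < n) (u : (Fin (n + 1) → ℝ) → ℝ)
    (hu : ContDiff ℝ (⊤ : ℕ∞) u)
    (heq : ∀ Y X X' : Fin (n + 1) → ℝ,
      mink Y Y = -1 → 1 ≤ Y 0 → mink X Y = 0 → mink X' Y = 0 →
      hypHess u Y X X' = u Y * mink X X') :
    ∃ P : Fin (n + 1) → ℝ,
      (∀ Y, mink Y Y = -1 → 1 ≤ Y 0 → u Y = mink P Y) ∧
      (∀ Y, mink Y Y = -1 → 1 ≤ Y 0 →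
        mink (hypGrad u Y) (hypGrad u Y) - (u Y) ^ 2 = mink P P) := by
  have heq' : ∀ Y X X' : Fin (n + 1) → ℝ,
      mink Y Y = -1 → 1 ≤ Y 0 → mink X Y = 0 → mink X' Y = 0 →
      fderiv ℝ (fun p => fderiv ℝ u p X') Y X + mink X X' * fderiv ℝ u Y Y
        = u Y * mink X X' :=
    fun Y X X' h1 h2 h3 h4 => heq Y X X' h1 h2 h3 h4
  refine ⟨fun i => Aux.Fv u i (Aux.ch 0), ?_, ?_⟩ <;> intro Y hY hY0 <;>
    have hP : (fun i => Aux.Fv u i (Aux.ch 0)) = fun j => hypGrad u Y j - u Y * Y j :=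
      funext fun j => by
        rw [← Aux.Fv_const hu heq' j (fun k => Y k.succ), Aux.ch_eq_of_hyp Y hY hY0,
          Aux.Fv_eq]
  · rw [hP, Aux.mink_sub_left, Aux.mink_hypGrad_self Y hY, Aux.mink_smul_left, hY]
    ring
  · rw [hP, Aux.mink_expand, Aux.mink_hypGrad_self Y hY, hY]
    ring
end

section
/- Let U : ℝ^{D-1} → ℝ be smooth, positive, and a function of |x|² only, say U = u(|x|²), and let σ ≠ 0. Suppose the umbilical condition U'/U = 2/(1/σ² - |a|² + |x|²) holds on the sphere {x : |x - a|² = 1/σ²} with a ≠ 0. Then on the region (|a| - 1/|σ|)² ≤ |x|² ≤ (|a| + 1/|σ|)², U is proportional to (|x|² + k)² with k = 1/σ² - |a|². -/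
/-!
Every value of `|x|²` in the annulus is attained on the sphere, at a point of the plane spanned
by `a` and a unit vector orthogonal to `a`. Hence `u' = 2u/(s + k)` on the
whole interval, and `u/(s + k)²` is constant wherever `s + k > 0`. At the right end
`s + k = 2r(r + |a|) > 0` with `r = 1/|σ|`; if `s + k` vanished inside the interval, `u` would
tend to `0` there, contradicting positivity.
-/

open Set Filter Topology RealInnerProductSpace Module

section Geometry

variable {E : Type*} [NormedAddCommGroup E] [InnerProductSpace ℝ E]

lemma exists_norm_eq_one_inner_eq_zero [FiniteDimensional ℝ E] (hE : 2 ≤ finrank ℝ E) (a : E) :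
    ∃ e : E, ‖e‖ = 1 ∧ ⟪a, e⟫ = 0 := by
  have hspan : finrank ℝ (ℝ ∙ a) ≤ 1 := by
    simpa using finrank_span_le_card ({a} : Set E)
  have hne : (ℝ ∙ a)ᗮ ≠ ⊥ := by
    intro h
    have := (ℝ ∙ a).finrank_add_finrank_orthogonal
    rw [h, finrank_bot] at this
    omega
  obtain ⟨v, hv, hv0⟩ := Submodule.exists_mem_ne_zero_of_ne_bot hne
  refine ⟨‖v‖⁻¹ • v, norm_smul_inv_norm hv0, ?_⟩
  rw [real_inner_smul_right, Submodule.mem_orthogonal_singleton_iff_inner_right.mp hv, mul_zero]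

lemma exists_norm_sub_sq_eq_and_norm_sq_eq {a e : E} (ha : a ≠ 0) (he : ‖e‖ = 1)
    (hae : ⟪a, e⟫ = 0) {r s : ℝ} (hlo : (‖a‖ - r) ^ 2 ≤ s) (hhi : s ≤ (‖a‖ + r) ^ 2) :
    ∃ x : E, ‖x - a‖ ^ 2 = r ^ 2 ∧ ‖x‖ ^ 2 = s := by
  have hA : 0 < ‖a‖ := norm_pos_iff.mpr ha
  obtain ⟨α, hα⟩ : ∃ α : ℝ, 2 * α * ‖a‖ ^ 2 = s + ‖a‖ ^ 2 - r ^ 2 :=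
    ⟨(s + ‖a‖ ^ 2 - r ^ 2) / (2 * ‖a‖ ^ 2), by field_simp⟩
  have hαr : (α - 1) ^ 2 * ‖a‖ ^ 2 ≤ r ^ 2 := by
    have h4 : 4 * ‖a‖ ^ 2 * ((α - 1) ^ 2 * ‖a‖ ^ 2) = (s - ‖a‖ ^ 2 - r ^ 2) ^ 2 := by
      linear_combination (2 * α * ‖a‖ ^ 2 - 2 * ‖a‖ ^ 2 + s - ‖a‖ ^ 2 - r ^ 2) * hα
    refine le_of_mul_le_mul_left ?_ (by positivity : 0 < 4 * ‖a‖ ^ 2)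
    nlinarith
  set β := √(r ^ 2 - (α - 1) ^ 2 * ‖a‖ ^ 2)
  have hβ : β ^ 2 = r ^ 2 - (α - 1) ^ 2 * ‖a‖ ^ 2 := Real.sq_sqrt (sub_nonneg.mpr hαr)
  have norm_sq (γ : ℝ) : ‖γ • a + β • e‖ ^ 2 = γ ^ 2 * ‖a‖ ^ 2 + β ^ 2 := by
    rw [norm_add_sq_real, real_inner_smul_left, real_inner_smul_right, hae]
    simp [norm_smul, he, mul_pow]
  refine ⟨α • a + β • e, ?_, ?_⟩
  · rw [show α • a + β • e - a = (α - 1) • a + β • e by rw [sub_smul, one_smul]; abel,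
      norm_sq, hβ]
    ring
  · rw [norm_sq, hβ]
    linear_combination hα

end Geometry

section ODE

variable {u : ℝ → ℝ} {k p q : ℝ}

lemma eq_mul_sq_of_hasDerivAt (hode : ∀ s ∈ Icc p q, HasDerivAt u (2 * u s / (s + k)) s)
    (hk : 0 < p + k) : ∀ s ∈ Icc p q, u s = u q / (q + k) ^ 2 * (s + k) ^ 2 := by
  have hk' : ∀ s ∈ Icc p q, s + k ≠ 0 := fun s hs => by linarith [hs.1]
  set g : ℝ → ℝ := fun s => u s / (s + k) ^ 2
  have hg : ∀ s ∈ Icc p q, HasDerivAt g 0 s := fun s hs => by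
    have hsq : HasDerivAt (fun s : ℝ => (s + k) ^ 2) (2 * (s + k)) s := by
      simpa using ((hasDerivAt_id s).add_const k).fun_pow 2
    refine ((hode s hs).fun_div hsq (pow_ne_zero 2 (hk' s hs))).congr_deriv ?_
    field_simp [hk' s hs]
    ring
  have hconst := constant_of_has_deriv_right_zero
    (fun s hs => (hg s hs).continuousAt.continuousWithinAt)
    (fun s hs => (hg s (Ico_subset_Icc_self hs)).hasDerivWithinAt)
  intro s hs
  have hgs : g s = g q := (hconst s hs).trans (hconst q ⟨hs.1.trans hs.2, le_rfl⟩).symm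
  simp only [g] at hgs
  rw [← hgs, div_mul_cancel₀ _ (pow_ne_zero 2 (hk' s hs))]

/-- Approaching `s = -k` from the right, `u = c (s + k)²` would tend to `0`. -/
lemma add_pos_of_hasDerivAt (hode : ∀ s ∈ Icc p q, HasDerivAt u (2 * u s / (s + k)) s)
    (hpos : ∀ s ∈ Icc p q, 0 < u s) (hq : 0 < q + k) : 0 < p + k := by
  by_contra! hp
  have hs₀ : -k ∈ Icc p q := ⟨by linarith, by linarith⟩
  set c := u q / (q + k) ^ 2
  have hsol : ∀ t ∈ Ioc (-k) q, u t = c * (t + k) ^ 2 := fun t ht =>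
    eq_mul_sq_of_hasDerivAt (fun s hs => hode s ⟨by linarith [ht.1, hs.1], hs.2⟩)
      (by linarith [ht.1]) t ⟨le_rfl, ht.2⟩
  have hlim : Tendsto u (𝓝[>] (-k)) (𝓝 (c * (-k + k) ^ 2)) := by
    have hcont : Continuous fun t : ℝ => c * (t + k) ^ 2 := by fun_prop
    refine Tendsto.congr' ?_ ((hcont.tendsto (-k)).mono_left nhdsWithin_le_nhds)
    filter_upwards [Ioc_mem_nhdsGT (show -k < q by linarith)] with t ht using (hsol t ht).symm
  have hu₀ : u (-k) = 0 := by
    simpa using tendsto_nhds_unique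
      ((hode _ hs₀).continuousAt.continuousWithinAt.tendsto) hlim
  exact (hpos _ hs₀).ne' hu₀

end ODE

/-- Type II flat base, `σ ≠ 0`, `a ≠ 0`: if `U = u(|x|²)` is smooth and positive and the
umbilical condition `u'/u = 2/(1/σ² - |a|² + |x|²)` holds on the sphere
`|x - a|² = 1/σ²`, then on `(|a| - 1/|σ|)² ≤ |x|² ≤ (|a| + 1/|σ|)²` the function `U` is
proportional to `(|x|² + k)²` with `k = 1/σ² - |a|²`. -/
theorem stmt_17 (n : ℕ) (hn : 2 ≤ n) (u : ℝ → ℝ) (σ : ℝ) (hσ : σ ≠ 0)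
    (a : EuclideanSpace ℝ (Fin n)) (ha : a ≠ 0)
    (hu : ContDiff ℝ 2 u) (hupos : ∀ s : ℝ, 0 < u s)
    (humb : ∀ x : EuclideanSpace ℝ (Fin n), ‖x - a‖ ^ 2 = 1 / σ ^ 2 →
      deriv u (‖x‖ ^ 2) / u (‖x‖ ^ 2)
        = 2 / (1 / σ ^ 2 - ‖a‖ ^ 2 + ‖x‖ ^ 2)) :
    ∃ c : ℝ, 0 < c ∧ ∀ s : ℝ,
      (‖a‖ - 1 / |σ|) ^ 2 ≤ s → s ≤ (‖a‖ + 1 / |σ|) ^ 2 →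
      u s = c * (s + (1 / σ ^ 2 - ‖a‖ ^ 2)) ^ 2 := by
  set r := 1 / |σ|
  set k := 1 / σ ^ 2 - ‖a‖ ^ 2
  have hr2 : r ^ 2 = 1 / σ ^ 2 := by rw [div_pow, one_pow, sq_abs]
  obtain ⟨e, he, hae⟩ := exists_norm_eq_one_inner_eq_zero (by simpa using hn) a
  have hode : ∀ s ∈ Icc ((‖a‖ - r) ^ 2) ((‖a‖ + r) ^ 2), HasDerivAt u (2 * u s / (s + k)) s := by
    rintro s ⟨hlo, hhi⟩
    obtain ⟨x, hxa, hx⟩ := exists_norm_sub_sq_eq_and_norm_sq_eq ha he hae hlo hhi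
    have hderiv := humb x (hxa.trans hr2)
    rw [hx, div_eq_iff (hupos s).ne', add_comm k] at hderiv
    -- this also holds at `s + k = 0`, where both sides are `0` since `x / 0 = 0`
    rw [show 2 * u s / (s + k) = deriv u s by rw [hderiv]; ring]
    exact (hu.differentiable (by norm_num) s).hasDerivAt
  have hr : 0 < r := by positivity
  have hhi : 0 < (‖a‖ + r) ^ 2 + k := by nlinarith [norm_nonneg a]
  have hlo := add_pos_of_hasDerivAt hode (fun s _ => hupos s) hhi
  exact ⟨_, div_pos (hupos _) (pow_pos hhi 2),
    fun s hs₁ hs₂ => eq_mul_sq_of_hasDerivAt hode hlo s ⟨hs₁, hs₂⟩⟩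
end
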